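/- arXiv:1702.02345 — 2 statements merged into one kernel-verified Lean document; each statement's English description precedes it below -/
import Mathlib

section
/- Let p : E → W be a covering map between topological spaces with E simply connected, let L ⊆ W be a path-connected subspace (with the subspace topology), and let x ∈ L be a basepoint. If the homomorphism i_♯ : π₁(L, x) → π₁(W, x) induced by the inclusion L ↪ W is injective, then every loop in the subspace p⁻¹(L) ⊆ E (a continuous map γ : [0,1] → p⁻¹(L) with γ(0) = γ(1)) is nullhomotopic within p⁻¹(L), i.e., homotopic rel its endpoints, through maps into p⁻¹(L), to a constant loop. -/
/-!
The restriction `q : p⁻¹(L) → L` of `p` is again a covering map, and a covering map is injective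
on homotopy classes of paths, so it suffices that the loop `q ∘ γ` is nullhomotopic in `L`. Its
image in `W` is `p` applied to a loop of the simply connected space `E`, hence trivial. Since `L` is
path-connected, injectivity of `i_♯` at `x` transfers to the basepoint of `q ∘ γ` by conjugating
with a path, and so `q ∘ γ` is trivial in `π₁(L)`.
-/

open CategoryTheory

/-- The homomorphism `f_♯ : π₁(X, x) → π₁(Y, f x)` induced on fundamental groups
by a continuous map `f : X → Y`. -/
noncomputable def inducedPi1Map {X Y : Type} [TopologicalSpace X] [TopologicalSpace Y]
    (f : C(X, Y)) (x : X) :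
    FundamentalGroup X x →* FundamentalGroup Y (f x) :=
  Functor.mapEnd (X := FundamentalGroupoid.mk x)
    ((FundamentalGroupoid.fundamentalGroupoidFunctor.map
      (show TopCat.of X ⟶ TopCat.of Y from TopCat.ofHom f)) :
      FundamentalGroupoid X ⥤ FundamentalGroupoid Y)

theorem CategoryTheory.Functor.mapEnd_injective_of_iso {C D : Type*} [Category C] [Category D]
    (F : C ⥤ D) {X Y : C} (e : X ≅ Y) (h : Function.Injective (F.mapEnd (X := X))) :
    Function.Injective (F.mapEnd (X := Y)) := by
  intro f g hfg
  apply e.symm.conj.injective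
  apply h
  simp only [mapEnd_apply, map_conj] at hfg ⊢
  rw [hfg]

theorem inducedPi1Map_injective_of_joined {X Y : Type} [TopologicalSpace X] [TopologicalSpace Y]
    (f : C(X, Y)) {x₀ x₁ : X} (h : Joined x₀ x₁)
    (hinj : Function.Injective (inducedPi1Map f x₀)) :
    Function.Injective (inducedPi1Map f x₁) :=
  Functor.mapEnd_injective_of_iso _
    ((Groupoid.isoEquivHom _ _).symm (Path.Homotopic.Quotient.mk h.somePath)) hinj

/-- If `p : E → W` is a covering map with `E` simply connected, `L ⊆ W` is a path-connected
subspace with basepoint `x ∈ L`, and the inclusion-induced map `π₁(L, x) → π₁(W, x)` is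
injective, then every loop in the subspace `p ⁻¹' L` is nullhomotopic (homotopic rel its
endpoints, through maps into `p ⁻¹' L`, to the constant loop). -/
theorem loops_nullhomotopic_of_pi1_injective
    {E W : Type} [TopologicalSpace E] [TopologicalSpace W]
    (p : E → W) (hp : IsCoveringMap p) [SimplyConnectedSpace E]
    (L : Set W) (hLpc : IsPathConnected L) (x : W) (hx : x ∈ L)
    (hinj : Function.Injective
      (inducedPi1Map (ContinuousMap.mk (Subtype.val : L → W) continuous_subtype_val)
        (⟨x, hx⟩ : L))) :
    ∀ (y : (p ⁻¹' L)) (γ : Path y y), γ.Homotopic (Path.refl y) := by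
  intro y γ
  have hq : IsCoveringMap (L.restrictPreimage p) := hp.restrictPreimage L
  have hinj_y := inducedPi1Map_injective_of_joined _
    (hLpc.joinedIn x hx (p y) y.2).joined_subtype hinj
  have hW : ((γ.map hq.continuous).map continuous_subtype_val).Homotopic (.refl (p y)) :=
    (SimplyConnectedSpace.paths_homotopic (γ.map continuous_subtype_val) (.refl y.1)).map
      ⟨p, hp.continuous⟩
  have hL : (γ.map hq.continuous).Homotopic (.refl (L.restrictPreimage p y)) :=
    Path.Homotopic.Quotient.eq.mp (hinj_y (Path.Homotopic.Quotient.eq.mpr hW))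
  exact Path.Homotopic.Quotient.eq.mp
    (hq.injective_path_homotopic_map y y (Path.Homotopic.Quotient.eq.mpr hL))
end

section
/- Let n ≥ 1 and let f : ℂ → (Fin n → ℂ) be a map that is continuous on the closed unit disc D̄ = {z ∈ ℂ : |z| ≤ 1} and complex differentiable on the open unit disc {z : |z| < 1}, and suppose that for every z with |z| = 1 and every k, the coordinate f(z) k is real (has imaginary part zero). Then f is constant on D̄. -/
/-!
On the unit circle each coordinate `g` of `f` has `Im g = 0`. Since `‖exp (∓I * g)‖ = exp (±Im g)`,
the maximum modulus principle applied to `exp (-I * g)` and `exp (I * g)` forces `Im g = 0` on the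
whole disc, and by the open mapping theorem a holomorphic function with constant imaginary part on
a connected open set is constant.
-/

open Metric Set Bornology

namespace Complex

variable {E : Type*} [NormedAddCommGroup E] [NormedSpace ℂ E] [Nontrivial E]

theorem im_le_of_forall_mem_frontier_im_le {g : E → ℂ} {U : Set E} (hU : IsBounded U)
    (hd : DiffContOnCl ℂ g U) {C : ℝ} (hC : ∀ z ∈ frontier U, (g z).im ≤ C) {z : E}
    (hz : z ∈ closure U) : (g z).im ≤ C := by
  have norm_exp_neg_I_mul (w : ℂ) : ‖exp (-I * w)‖ = Real.exp w.im := by simp [norm_exp]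
  have hexp : DiffContOnCl ℂ ((fun w ↦ exp (-I * w)) ∘ g) U :=
    Differentiable.comp_diffContOnCl (by fun_prop) hd
  have := norm_le_of_forall_mem_frontier_norm_le hU hexp (C := Real.exp C)
    (fun w hw ↦ (norm_exp_neg_I_mul _).trans_le (Real.exp_le_exp.2 (hC w hw))) hz
  rwa [Function.comp_apply, norm_exp_neg_I_mul, Real.exp_le_exp] at this

theorem im_eq_of_forall_mem_frontier_im_eq {g : E → ℂ} {U : Set E} (hU : IsBounded U)
    (hd : DiffContOnCl ℂ g U) {c : ℝ} (hc : ∀ z ∈ frontier U, (g z).im = c) {z : E}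
    (hz : z ∈ closure U) : (g z).im = c := by
  have hle := im_le_of_forall_mem_frontier_im_le hU hd (fun w hw ↦ (hc w hw).le) hz
  have hge := im_le_of_forall_mem_frontier_im_le hU hd.neg (C := -c)
    (fun w hw ↦ by simp [hc w hw]) hz
  simp only [Pi.neg_apply, neg_im] at hge
  linarith

theorem eq_const_of_forall_mem_frontier_im_eq {g : ℂ → ℂ} {U : Set ℂ} (hUb : IsBounded U)
    (hUo : IsOpen U) (hUc : IsConnected U) (hd : DiffContOnCl ℂ g U) {c : ℝ}
    (hc : ∀ z ∈ frontier U, (g z).im = c) : ∃ w, ∀ z ∈ closure U, g z = w := by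
  obtain ⟨w, hw⟩ := (hd.differentiableOn.analyticOnNhd hUo).eq_const_of_im_eq_const
    (fun z hz ↦ im_eq_of_forall_mem_frontier_im_eq hUb hd hc (subset_closure hz)) hUo hUc
  exact ⟨w, EqOn.of_subset_closure (g := fun _ ↦ w) hw hd.continuousOn continuousOn_const
    subset_closure subset_rfl⟩

end Complex

theorem holomorphic_disc_real_boundary_constant_general
    (n : ℕ) (f : ℂ → (Fin n → ℂ))
    (hc : ContinuousOn f {z : ℂ | ‖z‖ ≤ 1})
    (hd : DifferentiableOn ℂ f {z : ℂ | ‖z‖ < 1})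
    (hb : ∀ z : ℂ, ‖z‖ = 1 → ∀ k : Fin n, (f z k).im = 0) :
    ∀ z ∈ {z : ℂ | ‖z‖ ≤ 1}, ∀ w ∈ {z : ℂ | ‖z‖ ≤ 1}, f z = f w := by
  have closure_ball_eq : closure (ball (0 : ℂ) 1) = {z : ℂ | ‖z‖ ≤ 1} := by
    ext; simp [closure_ball (0 : ℂ) one_ne_zero]
  intro z hz w hw
  funext k
  have hdk : DiffContOnCl ℂ (f · k) (ball 0 1) :=
    ⟨(differentiableOn_pi.mp hd k).mono (ball_zero_eq 1).subset,
      closure_ball_eq ▸ (continuous_apply k).comp_continuousOn hc⟩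
  obtain ⟨v, hv⟩ := Complex.eq_const_of_forall_mem_frontier_im_eq isBounded_ball isOpen_ball
    (isConnected_ball one_pos) hdk (c := 0)
    (fun u hu ↦ hb u (by simpa [frontier_ball (0 : ℂ) one_ne_zero] using hu) k)
  rw [hv z (closure_ball_eq ▸ hz), hv w (closure_ball_eq ▸ hw)]

/-- A map `f : ℂ → ℂⁿ` that is continuous on the closed unit disc, holomorphic on the open
unit disc, and takes real values (coordinatewise) on the unit circle, is constant on the
closed unit disc. -/
theorem holomorphic_disc_real_boundary_constant
    (n : ℕ) (hn : 1 ≤ n) (f : ℂ → (Fin n → ℂ))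
    (hc : ContinuousOn f {z : ℂ | ‖z‖ ≤ 1})
    (hd : DifferentiableOn ℂ f {z : ℂ | ‖z‖ < 1})
    (hb : ∀ z : ℂ, ‖z‖ = 1 → ∀ k : Fin n, (f z k).im = 0) :
    ∀ z ∈ {z : ℂ | ‖z‖ ≤ 1}, ∀ w ∈ {z : ℂ | ‖z‖ ≤ 1}, f z = f w :=
  holomorphic_disc_real_boundary_constant_general n f hc hd hb
end
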